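/- Let e_{t+1} = A e_t + G w_t with i.i.d. noise w_t ∼ P_w and initial distribution P_0, and let P_t^e denote the distribution of e_t. Let τ, t ∈ ℕ with t ≥ τ, and suppose W(P̂, P_τ^e) ≤ ε for some distribution P̂. Then W(P̂, P_t^e) ≤ ε + ‖A^t − A^τ‖ · M₁(P_0) + M₁(P_w) · Σ_{i=τ}^{t−1} ‖A^i G‖, where M₁(Q) := ∫ ‖x‖ dQ(x). -/

import Mathlib

open MeasureTheory
open ProbabilityTheory

/-- The 1-Wasserstein distance: infimum over couplings of `P` and `Q` of the
expected distance. -/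
noncomputable def W1 {E : Type*} [NormedAddCommGroup E] [MeasurableSpace E]
    (P Q : Measure E) : ℝ :=
  sInf {c : ℝ | ∃ π : Measure (E × E),
    π.map Prod.fst = P ∧ π.map Prod.snd = Q ∧ c = ∫ p, ‖p.1 - p.2‖ ∂π}

/-- Convolution of measures: the distribution of the sum of independent draws. -/
noncomputable def mconv {E : Type*} [NormedAddCommGroup E] [MeasurableSpace E]
    (P Q : Measure E) : Measure E :=
  (P.prod Q).map (fun p => p.1 + p.2)

section StmtAux

open ProbabilityTheory

variable {n d : ℕ}
local notation "E" => EuclideanSpace ℝ (Fin n)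
local notation "D" => EuclideanSpace ℝ (Fin d)

/-- The state at time `s` as a function of the initial condition and the noises,
with "forward" indexing of the noise (valid in law since the noise is i.i.d.). -/
noncomputable def fdyn (A : E →L[ℝ] E) (G : D →L[ℝ] E) (s : ℕ) :
    E × (Fin s → D) → E :=
  fun p => (A ^ s) p.1 + ∑ k : Fin s, ((A ^ (k : ℕ)).comp G) (p.2 k)

lemma continuous_fdyn (A : E →L[ℝ] E) (G : D →L[ℝ] E) (s : ℕ) :
    Continuous (fdyn A G s) := by unfold fdyn; fun_prop

lemma law_fdyn (A : E →L[ℝ] E) (G : D →L[ℝ] E)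
    (P0 : Measure E) [IsProbabilityMeasure P0]
    (Pw : Measure D) [IsProbabilityMeasure Pw]
    (Pe : ℕ → Measure E) (hPe0 : Pe 0 = P0)
    (hPes : ∀ t, Pe (t + 1) = mconv (Measure.map A (Pe t)) (Measure.map G Pw)) :
    ∀ s, (P0.prod (Measure.pi fun _ : Fin s => Pw)).map (fdyn A G s) = Pe s := by
  intro s
  induction s with
  | zero =>
      have : fdyn A G 0 = Prod.fst := by funext p; simp [fdyn]
      rw [this, hPe0]; simp
  | succ s ih =>
      have h1 : MeasurePreserving
          (Prod.map (id : E → E) (MeasurableEquiv.piFinSuccAbove (fun _ : Fin (s+1) => D) 0))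
          (P0.prod (Measure.pi fun _ : Fin (s+1) => Pw))
          (P0.prod (Pw.prod (Measure.pi fun _ : Fin s => Pw))) :=
        (MeasurePreserving.id P0).prod (measurePreserving_piFinSuccAbove (fun _ => Pw) 0)
      have h2 : MeasurePreserving (Prod.map (id : E → E) (Prod.swap : D × (Fin s → D) → _))
          (P0.prod (Pw.prod (Measure.pi fun _ : Fin s => Pw)))
          (P0.prod ((Measure.pi fun _ : Fin s => Pw).prod Pw)) :=
        (MeasurePreserving.id P0).prod Measure.measurePreserving_swap
      have h3 : MeasurePreserving (MeasurableEquiv.prodAssoc.symm :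
            E × ((Fin s → D) × D) → (E × (Fin s → D)) × D)
          (P0.prod ((Measure.pi fun _ : Fin s => Pw).prod Pw))
          ((P0.prod (Measure.pi fun _ : Fin s => Pw)).prod Pw) :=
        (measurePreserving_prodAssoc P0 (Measure.pi fun _ : Fin s => Pw) Pw).symm
      have hT : MeasurePreserving
          (fun p : E × (Fin (s+1) → D) => ((p.1, fun k : Fin s => p.2 k.succ), p.2 0))
          (P0.prod (Measure.pi fun _ : Fin (s+1) => Pw))
          ((P0.prod (Measure.pi fun _ : Fin s => Pw)).prod Pw) := by
        have := (h3.comp h2).comp h1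
        convert this using 1
        funext p; rfl
      set g : (E × (Fin s → D)) × D → E := fun q => A (fdyn A G s q.1) + G q.2 with hg
      have hgm : Measurable g := by
        apply Measurable.add
        · exact (A.continuous.comp ((continuous_fdyn A G s).comp continuous_fst)).measurable
        · exact (G.continuous.comp continuous_snd).measurable
      have hfun : fdyn A G (s+1) = g ∘
          (fun p : E × (Fin (s+1) → D) => ((p.1, fun k : Fin s => p.2 k.succ), p.2 0)) := by
        funext p
        simp only [fdyn, Function.comp_apply, hg]
        rw [Fin.sum_univ_succ]
        have hsx : ∀ x : Fin s, ((A ^ ((x.succ : Fin (s+1)) : ℕ)).comp G) (p.2 x.succ)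
            = A (((A ^ (x : ℕ)).comp G) (p.2 x.succ)) := by
          intro x
          simp [Fin.val_succ, pow_succ', ContinuousLinearMap.mul_apply]
        simp only [hsx]
        have h1 : (A ^ (s+1)) p.1 = A ((A ^ s) p.1) := by
          simp [pow_succ', ContinuousLinearMap.mul_apply]
        rw [h1, map_add, map_sum]
        simp only [ContinuousLinearMap.comp_apply, Fin.val_zero, pow_zero,
          ContinuousLinearMap.one_apply]
        abel
      rw [hfun, ← Measure.map_map hgm hT.measurable, hT.map_eq, hPes, ih.symm, mconv]
      rw [Measure.map_map A.continuous.measurable (continuous_fdyn A G s).measurable]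
      rw [Measure.map_prod_map _ _ (A.continuous.measurable.comp
        (continuous_fdyn A G s).measurable) G.continuous.measurable]
      rw [Measure.map_map (by fun_prop : Measurable (fun p : E × E => p.1 + p.2))
        ((A.continuous.measurable.comp (continuous_fdyn A G s).measurable).prodMap
          G.continuous.measurable)]
      rfl

lemma proj_pi_one (Pw : Measure D) [IsProbabilityMeasure Pw] (t : ℕ) :
    (Measure.pi fun _ : Fin (t+1) => Pw).map (fun w => w ∘ Fin.castSucc)
      = Measure.pi (fun _ : Fin t => Pw) := by
  have h := (measurePreserving_piFinSuccAbove (fun _ : Fin (t+1) => Pw) (Fin.last t)).map_eq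
  have hfun : (fun w : Fin (t+1) → D => w ∘ Fin.castSucc)
      = Prod.snd ∘ (MeasurableEquiv.piFinSuccAbove (fun _ : Fin (t+1) => D) (Fin.last t)) := by
    funext w
    funext j
    simp [Fin.succAbove_last, Fin.init]
  rw [hfun, ← Measure.map_map measurable_snd (MeasurableEquiv.measurable _), h,
    Measure.map_snd_prod]
  simp

lemma proj_pi (Pw : Measure D) [IsProbabilityMeasure Pw] (τ : ℕ) :
    ∀ t (h : τ ≤ t), (Measure.pi fun _ : Fin t => Pw).map (fun w => w ∘ Fin.castLE h)
      = Measure.pi (fun _ : Fin τ => Pw) := by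
  intro t
  induction t with
  | zero => intro h
            have : τ = 0 := Nat.le_zero.mp h
            subst this
            have : (fun w : Fin 0 → D => w ∘ Fin.castLE (le_refl 0)) = id := by
              funext w; funext j; rfl
            rw [this, Measure.map_id]
  | succ t ih =>
      intro h
      rcases Nat.lt_or_ge τ (t+1) with h' | h'
      · have hτt : τ ≤ t := Nat.lt_succ_iff.mp h'
        have hfun : (fun w : Fin (t+1) → D => w ∘ Fin.castLE h)
            = (fun v : Fin t → D => v ∘ Fin.castLE hτt) ∘ (fun w => w ∘ Fin.castSucc) := by
          funext w; funext j; rfl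
        rw [hfun, ← Measure.map_map (by fun_prop) (by fun_prop), proj_pi_one, ih hτt]
      · have : τ = t+1 := le_antisymm h h'
        subst this
        have : (fun w : Fin (t+1) → D => w ∘ Fin.castLE h) = id := by
          funext w; funext j; rfl
        rw [this, Measure.map_id]

lemma map_eval_pi (Pw : Measure D) [IsProbabilityMeasure Pw] {t : ℕ} (k : Fin t) :
    (Measure.pi fun _ : Fin t => Pw).map (fun w => w k) = Pw := by
  ext s hs
  rw [Measure.map_apply (measurable_pi_apply k) hs]
  have hpre : (fun w : Fin t → D => w k) ⁻¹' s
      = Set.pi Set.univ (Function.update (fun _ : Fin t => (Set.univ : Set D)) k s) := by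
    ext w
    simp only [Set.mem_preimage, Set.mem_pi, Set.mem_univ, forall_true_left, Function.update]
    constructor
    · intro h i
      by_cases hik : i = k
      · subst hik; simpa using h
      · simp [hik]
    · intro h
      have := h k
      simpa using this
  rw [hpre, Measure.pi_pi]
  rw [Finset.prod_eq_single k]
  · simp [Function.update]
  · intro i _ hik
    simp [Function.update, hik]
  · simp

lemma integrable_norm_comp {α : Type*} [MeasurableSpace α] {m : ℕ} (μ : Measure α)
    (f : α → EuclideanSpace ℝ (Fin m)) (hf : Measurable f)
    (hQ : Integrable (fun x => ‖x‖) (μ.map f)) : Integrable (fun x => ‖f x‖) μ :=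
  (integrable_map_measure hQ.aestronglyMeasurable hf.aemeasurable).mp hQ

end StmtAux
/-- Ambiguity dynamics: if `W(P̂, P_τ^e) ≤ ε` then for `t ≥ τ`,
`W(P̂, P_t^e) ≤ ε + ‖A^t − A^τ‖·M₁(P₀) + M₁(P_w)·Σ_{i=τ}^{t−1} ‖A^i G‖`. -/
theorem stmt9 {n d : ℕ}
    (A : EuclideanSpace ℝ (Fin n) →L[ℝ] EuclideanSpace ℝ (Fin n))
    (G : EuclideanSpace ℝ (Fin d) →L[ℝ] EuclideanSpace ℝ (Fin n))
    (P0 : Measure (EuclideanSpace ℝ (Fin n))) [IsProbabilityMeasure P0]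
    (Pw : Measure (EuclideanSpace ℝ (Fin d))) [IsProbabilityMeasure Pw]
    (hP0 : Integrable (fun x => ‖x‖) P0)
    (hPw : Integrable (fun x => ‖x‖) Pw)
    (Pe : ℕ → Measure (EuclideanSpace ℝ (Fin n)))
    (hPe0 : Pe 0 = P0)
    (hPes : ∀ t, Pe (t + 1) = mconv (Measure.map A (Pe t)) (Measure.map G Pw))
    (Phat : Measure (EuclideanSpace ℝ (Fin n))) [IsProbabilityMeasure Phat]
    (hPhat : Integrable (fun x => ‖x‖) Phat)
    (τ t : ℕ) (hτt : τ ≤ t)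
    (ε : ℝ) (hball : W1 Phat (Pe τ) ≤ ε) :
    W1 Phat (Pe t) ≤ ε + ‖A ^ t - A ^ τ‖ * (∫ x, ‖x‖ ∂P0)
      + (∫ x, ‖x‖ ∂Pw) * ∑ i ∈ Finset.Ico τ t, ‖(A ^ i).comp G‖ := by
  classical
  set ν : Measure (EuclideanSpace ℝ (Fin n) × (Fin t → EuclideanSpace ℝ (Fin d))) :=
    P0.prod (Measure.pi fun _ : Fin t => Pw) with hν
  set ft := fdyn A G t with hft
  set res : EuclideanSpace ℝ (Fin n) × (Fin t → EuclideanSpace ℝ (Fin d)) →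
      EuclideanSpace ℝ (Fin n) × (Fin τ → EuclideanSpace ℝ (Fin d)) :=
    fun p => (p.1, fun j : Fin τ => p.2 (Fin.castLE hτt j)) with hres
  set fτ' := fun p => fdyn A G τ (res p) with hfτ
  have hftm : Measurable ft := (continuous_fdyn A G t).measurable
  have hresm : Measurable res := by
    apply Measurable.prodMk measurable_fst
    exact measurable_pi_iff.mpr fun j => (measurable_pi_apply _).comp measurable_snd
  have hfτm : Measurable fτ' := (continuous_fdyn A G τ).measurable.comp hresm
  have hlawt : ν.map ft = Pe t := law_fdyn A G P0 Pw Pe hPe0 hPes t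
  have hres_law : ν.map res = P0.prod (Measure.pi fun _ : Fin τ => Pw) := by
    have hmp : MeasurePreserving
        (fun w : Fin t → EuclideanSpace ℝ (Fin d) => w ∘ Fin.castLE hτt)
        (Measure.pi fun _ : Fin t => Pw) (Measure.pi fun _ : Fin τ => Pw) :=
      ⟨by fun_prop, proj_pi Pw τ t hτt⟩
    exact ((MeasurePreserving.id P0).prod hmp).map_eq
  have hlawτ : ν.map fτ' = Pe τ := by
    have : fτ' = fdyn A G τ ∘ res := rfl
    rw [this, ← Measure.map_map (continuous_fdyn A G τ).measurable hresm, hres_law,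
      law_fdyn A G P0 Pw Pe hPe0 hPes τ]
  have hPeτ_prob : IsProbabilityMeasure (Pe τ) := by
    rw [← hlawτ]; exact Measure.isProbabilityMeasure_map hfτm.aemeasurable
  have hPet_prob : IsProbabilityMeasure (Pe t) := by
    rw [← hlawt]; exact Measure.isProbabilityMeasure_map hftm.aemeasurable
  -- marginal laws under ν
  have hmapfst : ν.map Prod.fst = P0 := by rw [hν, Measure.map_fst_prod]; simp
  have hmapev : ∀ k : Fin t, ν.map (fun p => p.2 k) = Pw := by
    intro k
    have : (fun p : EuclideanSpace ℝ (Fin n) × (Fin t → EuclideanSpace ℝ (Fin d)) => p.2 k)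
        = (fun w : Fin t → EuclideanSpace ℝ (Fin d) => w k) ∘ Prod.snd := rfl
    rw [this, ← Measure.map_map (measurable_pi_apply k) measurable_snd, hν,
      Measure.map_snd_prod]
    simp [map_eval_pi Pw k]
  -- moment integrabilities under ν
  have hmfst : Integrable (fun p => ‖p.1‖) ν :=
    integrable_norm_comp ν Prod.fst measurable_fst (by rw [hmapfst]; exact hP0)
  have hmev : ∀ k : Fin t, Integrable (fun p => ‖p.2 k‖) ν := fun k =>
    integrable_norm_comp ν (fun p => p.2 k)
      ((measurable_pi_apply k).comp measurable_snd) (by rw [hmapev k]; exact hPw)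
  -- representation of ft and fτ'
  set wv : EuclideanSpace ℝ (Fin n) × (Fin t → EuclideanSpace ℝ (Fin d)) → ℕ →
      EuclideanSpace ℝ (Fin d) :=
    fun p k => if h : k < t then p.2 ⟨k, h⟩ else 0 with hwv
  have h_ft_repr : ∀ p, ft p
      = (A ^ t) p.1 + ∑ k ∈ Finset.range t, ((A ^ k).comp G) (wv p k) := by
    intro p
    rw [hft]
    simp only [fdyn]
    congr 1
    rw [← Fin.sum_univ_eq_sum_range (fun k => ((A ^ k).comp G) (wv p k)) t]
    refine Finset.sum_congr rfl fun k _ => ?_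
    rw [hwv]
    simp only [Fin.is_lt, dif_pos, Fin.eta]
  have h_fτ_repr : ∀ p, fτ' p
      = (A ^ τ) p.1 + ∑ k ∈ Finset.range τ, ((A ^ k).comp G) (wv p k) := by
    intro p
    rw [hfτ]
    simp only [fdyn, hres]
    congr 1
    rw [← Fin.sum_univ_eq_sum_range (fun k => ((A ^ k).comp G) (wv p k)) τ]
    refine Finset.sum_congr rfl fun j _ => ?_
    have hjt : (j : ℕ) < t := lt_of_lt_of_le j.isLt hτt
    rw [hwv]
    simp only [hjt, dif_pos]
    rfl
  have hdiff : ∀ p, ft p - fτ' p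
      = (A ^ t - A ^ τ) p.1 + ∑ k ∈ Finset.Ico τ t, ((A ^ k).comp G) (wv p k) := by
    intro p
    rw [h_ft_repr p, h_fτ_repr p]
    have hsum : ∑ k ∈ Finset.range t, ((A ^ k).comp G) (wv p k)
        = ∑ k ∈ Finset.range τ, ((A ^ k).comp G) (wv p k)
          + ∑ k ∈ Finset.Ico τ t, ((A ^ k).comp G) (wv p k) := by
      exact (Finset.sum_range_add_sum_Ico _ hτt).symm
    rw [hsum, ContinuousLinearMap.sub_apply]
    abel
  have hnorm : ∀ p, ‖ft p - fτ' p‖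
      ≤ ‖A ^ t - A ^ τ‖ * ‖p.1‖ + ∑ k ∈ Finset.Ico τ t, ‖(A ^ k).comp G‖ * ‖wv p k‖ := by
    intro p
    rw [hdiff p]
    refine le_trans (norm_add_le _ _) (add_le_add ((A ^ t - A ^ τ).le_opNorm p.1) ?_)
    refine le_trans (norm_sum_le _ _) (Finset.sum_le_sum fun k _ => ?_)
    exact ((A ^ k).comp G).le_opNorm (wv p k)
  set gb : EuclideanSpace ℝ (Fin n) × (Fin t → EuclideanSpace ℝ (Fin d)) → ℝ :=
    fun p => ‖A ^ t - A ^ τ‖ * ‖p.1‖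
      + ∑ k ∈ Finset.Ico τ t, ‖(A ^ k).comp G‖ * ‖wv p k‖ with hgb
  have hterm : ∀ k ∈ Finset.Ico τ t,
      Integrable (fun p => ‖(A ^ k).comp G‖ * ‖wv p k‖) ν := by
    intro k hk
    have hkt : k < t := (Finset.mem_Ico.mp hk).2
    have : (fun p => ‖(A ^ k).comp G‖ * ‖wv p k‖)
        = fun p => ‖(A ^ k).comp G‖ * ‖p.2 ⟨k, hkt⟩‖ := by
      funext p; rw [hwv]; simp only [hkt, dif_pos]
    rw [this]
    exact (hmev ⟨k, hkt⟩).const_mul _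
  have hgb_int : Integrable gb ν := by
    rw [hgb]
    exact (hmfst.const_mul _).add (integrable_finset_sum _ hterm)
  have hgb_integral : ∫ p, gb p ∂ν
      = ‖A ^ t - A ^ τ‖ * (∫ x, ‖x‖ ∂P0)
        + ∑ k ∈ Finset.Ico τ t, ‖(A ^ k).comp G‖ * (∫ x, ‖x‖ ∂Pw) := by
    rw [hgb]
    rw [integral_add (hmfst.const_mul _) (integrable_finset_sum _ hterm)]
    congr 1
    · rw [integral_const_mul]
      congr 1
      rw [← hmapfst, integral_map measurable_fst.aemeasurable
        continuous_norm.aestronglyMeasurable]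
    · rw [integral_finset_sum _ hterm]
      refine Finset.sum_congr rfl fun k hk => ?_
      have hkt : k < t := (Finset.mem_Ico.mp hk).2
      have h1 : (fun p => ‖(A ^ k).comp G‖ * ‖wv p k‖)
          = fun p => ‖(A ^ k).comp G‖ * ‖p.2 ⟨k, hkt⟩‖ := by
        funext p; rw [hwv]; simp only [hkt, dif_pos]
      rw [h1, integral_const_mul]
      congr 1
      rw [← hmapev ⟨k, hkt⟩, integral_map
        (show Measurable (fun p : EuclideanSpace ℝ (Fin n) ×
            (Fin t → EuclideanSpace ℝ (Fin d)) => p.2 ⟨k, hkt⟩ ) from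
          (measurable_pi_apply _).comp measurable_snd).aemeasurable
        continuous_norm.aestronglyMeasurable]
  have hInc : ∫ p, ‖ft p - fτ' p‖ ∂ν
      ≤ ‖A ^ t - A ^ τ‖ * (∫ x, ‖x‖ ∂P0)
        + ∑ k ∈ Finset.Ico τ t, ‖(A ^ k).comp G‖ * (∫ x, ‖x‖ ∂Pw) := by
    rw [← hgb_integral]
    exact integral_mono_of_nonneg (Filter.Eventually.of_forall fun p => norm_nonneg _)
      hgb_int (Filter.Eventually.of_forall hnorm)
  -- integrability of the norms of ft and fτ'
  have hfτ_norm_int : Integrable (fun p => ‖fτ' p‖) ν := by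
    have hb : Integrable (fun p => ‖A ^ τ‖ * ‖p.1‖
        + ∑ k ∈ Finset.range τ, ‖(A ^ k).comp G‖ * ‖wv p k‖) ν := by
      refine (hmfst.const_mul _).add (integrable_finset_sum _ fun k hk => ?_)
      have hkt : k < t := lt_of_lt_of_le (Finset.mem_range.mp hk) hτt
      have h1 : (fun p => ‖(A ^ k).comp G‖ * ‖wv p k‖)
          = fun p => ‖(A ^ k).comp G‖ * ‖p.2 ⟨k, hkt⟩‖ := by
        funext p; rw [hwv]; simp only [hkt, dif_pos]
      rw [h1]; exact (hmev ⟨k, hkt⟩).const_mul _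
    refine hb.mono hfτm.norm.aestronglyMeasurable
      (Filter.Eventually.of_forall fun p => ?_)
    rw [norm_norm, h_fτ_repr p]
    refine le_trans (le_trans (norm_add_le _ _) (add_le_add ((A ^ τ).le_opNorm p.1)
      (le_trans (norm_sum_le _ _) (Finset.sum_le_sum fun k _ =>
        ((A ^ k).comp G).le_opNorm (wv p k))))) ?_
    rw [Real.norm_eq_abs]
    exact le_abs_self _
  have hMτ : Integrable (fun x => ‖x‖) (Pe τ) := by
    rw [← hlawτ]
    exact (integrable_map_measure continuous_norm.aestronglyMeasurable
      hfτm.aemeasurable).mpr hfτ_norm_int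
  -- unfold W1 in the hypothesis and conclude via an approximate optimal coupling
  simp only [W1] at hball ⊢
  refine le_of_forall_pos_le_add fun δ hδ => ?_
  have hSne : Set.Nonempty {c : ℝ | ∃ π : Measure (EuclideanSpace ℝ (Fin n) ×
      EuclideanSpace ℝ (Fin n)),
      π.map Prod.fst = Phat ∧ π.map Prod.snd = Pe τ ∧ c = ∫ p, ‖p.1 - p.2‖ ∂π} := by
    refine ⟨∫ p, ‖p.1 - p.2‖ ∂(Phat.prod (Pe τ)), Phat.prod (Pe τ), ?_, ?_, rfl⟩
    · rw [Measure.map_fst_prod]; simp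
    · rw [Measure.map_snd_prod]; simp
  have hlt : sInf {c : ℝ | ∃ π : Measure (EuclideanSpace ℝ (Fin n) ×
      EuclideanSpace ℝ (Fin n)),
      π.map Prod.fst = Phat ∧ π.map Prod.snd = Pe τ ∧ c = ∫ p, ‖p.1 - p.2‖ ∂π}
      < ε + δ := lt_of_le_of_lt hball (by linarith)
  obtain ⟨c, hcS, hcδ⟩ := exists_lt_of_csInf_lt hSne hlt
  obtain ⟨π, hπ1, hπ2, hπc⟩ := hcS
  have hπuniv : π Set.univ = 1 := by
    have h := congrArg (fun μ : Measure (EuclideanSpace ℝ (Fin n)) => μ Set.univ) hπ1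
    rw [Measure.map_apply measurable_fst MeasurableSet.univ, Set.preimage_univ] at h
    rw [h]; exact measure_univ
  have hπprob : IsProbabilityMeasure π := ⟨hπuniv⟩
  set π' := π.map Prod.swap with hπ'def
  have hπ'prob : IsProbabilityMeasure π' :=
    Measure.isProbabilityMeasure_map measurable_swap.aemeasurable
  have hπ'1 : π'.map Prod.fst = Pe τ := by
    rw [hπ'def, Measure.map_map measurable_fst measurable_swap]
    exact hπ2
  have hπ'2 : π'.map Prod.snd = Phat := by
    rw [hπ'def, Measure.map_map measurable_snd measurable_swap]
    exact hπ1
  have hπ'fst : π'.fst = Pe τ := hπ'1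
  set κ := π'.condKernel with hκdef
  have hκdis : π'.fst ⊗ₘ κ = π' := Measure.disintegrate π' π'.condKernel
  set κ' := κ.comap fτ' hfτm with hκ'def
  set η := ν ⊗ₘ κ' with hηdef
  have hηfst : η.map Prod.fst = ν := Measure.fst_compProd ν κ'
  set h2 : (EuclideanSpace ℝ (Fin n) × (Fin t → EuclideanSpace ℝ (Fin d))) ×
      EuclideanSpace ℝ (Fin n) → EuclideanSpace ℝ (Fin n) × EuclideanSpace ℝ (Fin n) :=
    fun q => (fτ' q.1, q.2) with hh2def
  have hh2m : Measurable h2 := (hfτm.comp measurable_fst).prodMk measurable_snd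
  have hmap2 : η.map h2 = π' := by
    ext s hs
    rw [Measure.map_apply hh2m hs, hηdef, Measure.compProd_apply (hh2m hs)]
    have hpt : ∀ ω, κ' ω (Prod.mk ω ⁻¹' (h2 ⁻¹' s))
        = (fun y => κ y (Prod.mk y ⁻¹' s)) (fτ' ω) := by
      intro ω
      rw [hκ'def, Kernel.comap_apply]
      rfl
    rw [lintegral_congr hpt,
      ← lintegral_map (Kernel.measurable_kernel_prodMk_left hs) hfτm,
      hlawτ, ← hπ'fst, ← Measure.compProd_apply hs, hκdis]
  set Pi2 : Measure (EuclideanSpace ℝ (Fin n) × EuclideanSpace ℝ (Fin n)) :=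
    η.map (fun q => (q.2, ft q.1)) with hPi2def
  have hPi2m : Measurable (fun q : (EuclideanSpace ℝ (Fin n) ×
      (Fin t → EuclideanSpace ℝ (Fin d))) × EuclideanSpace ℝ (Fin n) => (q.2, ft q.1)) :=
    measurable_snd.prodMk (hftm.comp measurable_fst)
  have hPi2fst : Pi2.map Prod.fst = Phat := by
    rw [hPi2def, Measure.map_map measurable_fst hPi2m]
    have h5 : η.map Prod.snd = (η.map h2).map Prod.snd :=
      (Measure.map_map measurable_snd hh2m).symm
    calc η.map (Prod.fst ∘ fun q => (q.2, ft q.1)) = η.map Prod.snd := rfl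
    _ = (η.map h2).map Prod.snd := h5
    _ = Phat := by rw [hmap2]; exact hπ'2
  have hPi2snd : Pi2.map Prod.snd = Pe t := by
    rw [hPi2def, Measure.map_map measurable_snd hPi2m]
    have h6 : η.map (Prod.snd ∘ fun q => (q.2, ft q.1)) = (η.map Prod.fst).map ft :=
      (Measure.map_map hftm measurable_fst).symm
    rw [h6, hηfst, hlawt]
  -- integrability of the cost pieces
  have hπ'int : Integrable (fun p : EuclideanSpace ℝ (Fin n) ×
      EuclideanSpace ℝ (Fin n) => ‖p.2 - p.1‖) π' := by
    have ha : Integrable (fun p : EuclideanSpace ℝ (Fin n) ×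
        EuclideanSpace ℝ (Fin n) => ‖p.1‖) π' :=
      integrable_norm_comp π' Prod.fst measurable_fst (by rw [hπ'1]; exact hMτ)
    have hb : Integrable (fun p : EuclideanSpace ℝ (Fin n) ×
        EuclideanSpace ℝ (Fin n) => ‖p.2‖) π' :=
      integrable_norm_comp π' Prod.snd measurable_snd (by rw [hπ'2]; exact hPhat)
    refine (ha.add hb).mono
      (continuous_snd.sub continuous_fst).norm.aestronglyMeasurable
      (Filter.Eventually.of_forall fun p => ?_)
    rw [norm_norm]
    calc ‖p.2 - p.1‖ ≤ ‖p.2‖ + ‖p.1‖ := norm_sub_le _ _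
    _ = ‖p.1‖ + ‖p.2‖ := add_comm _ _
    _ ≤ ‖‖p.1‖ + ‖p.2‖‖ := by rw [Real.norm_eq_abs]; exact le_abs_self _
  have hI1 : Integrable (fun q => ‖q.2 - fτ' q.1‖) η := by
    have hiff := integrable_map_measure
      ((continuous_snd.sub continuous_fst).norm.aestronglyMeasurable :
        AEStronglyMeasurable (fun p : EuclideanSpace ℝ (Fin n) ×
          EuclideanSpace ℝ (Fin n) => ‖p.2 - p.1‖) (η.map h2)) hh2m.aemeasurable
    rw [hmap2] at hiff
    exact hiff.mp hπ'int
  have hI2ν : Integrable (fun p => ‖fτ' p - ft p‖) ν := by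
    refine hgb_int.mono (hfτm.sub hftm).norm.aestronglyMeasurable
      (Filter.Eventually.of_forall fun p => ?_)
    rw [norm_norm, norm_sub_rev]
    refine le_trans (hnorm p) ?_
    rw [Real.norm_eq_abs]
    exact le_abs_self _
  have hI2 : Integrable (fun q : (EuclideanSpace ℝ (Fin n) ×
      (Fin t → EuclideanSpace ℝ (Fin d))) ×
      EuclideanSpace ℝ (Fin n) => ‖fτ' q.1 - ft q.1‖) η := by
    have hiff := integrable_map_measure
      ((hfτm.sub hftm).norm.aestronglyMeasurable :
        AEStronglyMeasurable (fun p => ‖fτ' p - ft p‖) (η.map Prod.fst))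
      measurable_fst.aemeasurable
    rw [hηfst] at hiff
    exact hiff.mp hI2ν
  -- cost computations
  have hcostPi2 : ∫ q, ‖q.1 - q.2‖ ∂Pi2 = ∫ q, ‖q.2 - ft q.1‖ ∂η := by
    rw [hPi2def, integral_map (f := fun q : EuclideanSpace ℝ (Fin n) × EuclideanSpace ℝ (Fin n) => ‖q.1 - q.2‖) hPi2m.aemeasurable
      (continuous_fst.sub continuous_snd).norm.aestronglyMeasurable]
  have hI1val : ∫ q, ‖q.2 - fτ' q.1‖ ∂η = c := by
    have h6 : ∫ p, ‖p.2 - p.1‖ ∂π' = ∫ q, ‖q.2 - fτ' q.1‖ ∂η := by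
      rw [← hmap2, integral_map (f := fun p : EuclideanSpace ℝ (Fin n) × EuclideanSpace ℝ (Fin n) => ‖p.2 - p.1‖) hh2m.aemeasurable
        (continuous_snd.sub continuous_fst).norm.aestronglyMeasurable]
    have h7 : ∫ p, ‖p.2 - p.1‖ ∂π' = ∫ p, ‖p.1 - p.2‖ ∂π := by
      rw [hπ'def, integral_map (f := fun p : EuclideanSpace ℝ (Fin n) × EuclideanSpace ℝ (Fin n) => ‖p.2 - p.1‖) measurable_swap.aemeasurable
        (continuous_snd.sub continuous_fst).norm.aestronglyMeasurable]
      rfl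
    rw [← h6, h7, ← hπc]
  have hI2val : ∫ q, ‖fτ' q.1 - ft q.1‖ ∂η = ∫ p, ‖fτ' p - ft p‖ ∂ν := by
    rw [← hηfst, integral_map (f := fun p => ‖fτ' p - ft p‖) measurable_fst.aemeasurable
      (hfτm.sub hftm).norm.aestronglyMeasurable]
  have htineq : ∫ q, ‖q.2 - ft q.1‖ ∂η
      ≤ (∫ q, ‖q.2 - fτ' q.1‖ ∂η) + ∫ q, ‖fτ' q.1 - ft q.1‖ ∂η := by
    rw [← integral_add hI1 hI2]
    refine integral_mono_of_nonneg (Filter.Eventually.of_forall fun q => norm_nonneg _)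
      (hI1.add hI2) (Filter.Eventually.of_forall fun q => ?_)
    dsimp only
    have h8 : q.2 - ft q.1 = (q.2 - fτ' q.1) + (fτ' q.1 - ft q.1) := by abel
    rw [h8]
    exact norm_add_le _ _
  have hswapnorm : ∫ p, ‖fτ' p - ft p‖ ∂ν = ∫ p, ‖ft p - fτ' p‖ ∂ν := by
    simp_rw [norm_sub_rev]
  have hmem : (∫ q, ‖q.1 - q.2‖ ∂Pi2) ∈ {c : ℝ | ∃ π : Measure (EuclideanSpace ℝ (Fin n) ×
      EuclideanSpace ℝ (Fin n)),
      π.map Prod.fst = Phat ∧ π.map Prod.snd = Pe t ∧ c = ∫ p, ‖p.1 - p.2‖ ∂π} :=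
    ⟨Pi2, hPi2fst, hPi2snd, rfl⟩
  have hbdd : BddBelow {c : ℝ | ∃ π : Measure (EuclideanSpace ℝ (Fin n) ×
      EuclideanSpace ℝ (Fin n)),
      π.map Prod.fst = Phat ∧ π.map Prod.snd = Pe t ∧ c = ∫ p, ‖p.1 - p.2‖ ∂π} := by
    refine ⟨0, fun c'' hc => ?_⟩
    obtain ⟨π'', _, _, rfl⟩ := hc
    exact integral_nonneg fun q => norm_nonneg _
  have hW1le : sInf {c : ℝ | ∃ π : Measure (EuclideanSpace ℝ (Fin n) ×
      EuclideanSpace ℝ (Fin n)),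
      π.map Prod.fst = Phat ∧ π.map Prod.snd = Pe t ∧ c = ∫ p, ‖p.1 - p.2‖ ∂π}
      ≤ ∫ q, ‖q.1 - q.2‖ ∂Pi2 := csInf_le hbdd hmem
  have hsum_swap : ∑ k ∈ Finset.Ico τ t, ‖(A ^ k).comp G‖ * (∫ x, ‖x‖ ∂Pw)
      = (∫ x, ‖x‖ ∂Pw) * ∑ i ∈ Finset.Ico τ t, ‖(A ^ i).comp G‖ := by
    rw [← Finset.sum_mul, mul_comm]
  linarith [hW1le, hcostPi2, htineq, hI1val, hI2val, hswapnorm, hInc, hcδ, hsum_swap]
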